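/- arXiv:2512.07340 — 2 statements merged into one kernel-verified Lean document; each statement's English description precedes it below -/
import Mathlib

section
/- Let U, V ∈ SL(2,ℝ) with traces > 2, let p,q ≥ 1, m ≥ 0, and set X = UV, X̃ = VU, Y = V^q(UV)^m U^p, Ỹ = U^p(VU)^m V^q, W₀ = XYX, W₁ = X̃YX̃, W₂ = XỸX. Then, with η = tr(X(Ỹ−Y)) and t₁ = tr(XY), one has W₁ − W₀ = η·X̃ + t₁·(X̃ − X). -/
open Matrix

lemma CH2 (M : Matrix (Fin 2) (Fin 2) ℝ) (h : M.det = 1) :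
    M * M = M.trace • M - 1 := by
  rw [Matrix.det_fin_two] at h
  ext i j
  fin_cases i <;> fin_cases j <;>
    simp [Matrix.mul_apply, Matrix.trace, Fin.sum_univ_two, Matrix.one_apply] <;>
    (first | linear_combination -h | ring)

lemma powrec (M : Matrix (Fin 2) (Fin 2) ℝ) (h : M.det = 1) (n : ℕ) :
    M ^ (n + 2) = M.trace • M ^ (n + 1) - M ^ n := by
  have := CH2 M h
  calc M ^ (n + 2) = M ^ n * (M * M) := by rw [pow_add]; rw [pow_two]
    _ = M ^ n * (M.trace • M - 1) := by rw [this]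
    _ = M.trace • M ^ (n + 1) - M ^ n := by
        rw [mul_sub, mul_smul_comm, mul_one, pow_succ]

lemma two_step (c : ℝ) (f g : ℕ → ℝ) (h0 : f 0 = g 0) (h1 : f 1 = g 1)
    (hf : ∀ n, f (n + 2) = c * f (n + 1) - f n)
    (hg : ∀ n, g (n + 2) = c * g (n + 1) - g n) : ∀ n, f n = g n := by
  intro n
  induction n using Nat.twoStepInduction with
  | zero => exact h0
  | one => exact h1
  | more n ih1 ih2 => rw [hf, hg, ih1, ih2]

lemma trace_eq (U V : Matrix (Fin 2) (Fin 2) ℝ) (hU : U.det = 1) (hV : V.det = 1)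
    (p q m : ℕ) :
    ((V * U) * (V ^ q * (U * V) ^ m * U ^ p)).trace
      = ((U * V) * (U ^ p * (V * U) ^ m * V ^ q)).trace := by
  have hUV : (U * V).det = 1 := by rw [Matrix.det_mul, hU, hV, one_mul]
  have hVU : (V * U).det = 1 := by rw [Matrix.det_mul, hU, hV, one_mul]
  have htVU : (V * U).trace = (U * V).trace := Matrix.trace_mul_comm V U
  set f : ℕ → ℕ → ℕ → ℝ :=
    fun p q m => ((V * U) * (V ^ q * (U * V) ^ m * U ^ p)).trace with hf
  set g : ℕ → ℕ → ℕ → ℝ :=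
    fun p q m => ((U * V) * (U ^ p * (V * U) ^ m * V ^ q)).trace with hg
  show f p q m = g p q m
  have hfm : ∀ p q n, f p q (n + 2) = (U * V).trace * f p q (n + 1) - f p q n := by
    intro p q n
    simp only [hf, powrec (U * V) hUV n]
    simp [mul_sub, sub_mul, mul_smul_comm, smul_mul_assoc, Matrix.trace_sub,
      Matrix.trace_smul, smul_eq_mul]
  have hgm : ∀ p q n, g p q (n + 2) = (U * V).trace * g p q (n + 1) - g p q n := by
    intro p q n
    simp only [hg, powrec (V * U) hVU n, htVU]
    simp [mul_sub, sub_mul, mul_smul_comm, smul_mul_assoc, Matrix.trace_sub,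
      Matrix.trace_smul, smul_eq_mul]
  have hfq : ∀ p m n, f p (n + 2) m = V.trace * f p (n + 1) m - f p n m := by
    intro p m n
    simp only [hf, powrec V hV n]
    simp [mul_sub, sub_mul, mul_smul_comm, smul_mul_assoc, Matrix.trace_sub,
      Matrix.trace_smul, smul_eq_mul]
  have hgq : ∀ p m n, g p (n + 2) m = V.trace * g p (n + 1) m - g p n m := by
    intro p m n
    simp only [hg, powrec V hV n]
    simp [mul_sub, sub_mul, mul_smul_comm, smul_mul_assoc, Matrix.trace_sub,
      Matrix.trace_smul, smul_eq_mul]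
  have hfp : ∀ q m n, f (n + 2) q m = U.trace * f (n + 1) q m - f n q m := by
    intro q m n
    simp only [hf, powrec U hU n]
    simp [mul_sub, sub_mul, mul_smul_comm, smul_mul_assoc, Matrix.trace_sub,
      Matrix.trace_smul, smul_eq_mul]
  have hgp : ∀ q m n, g (n + 2) q m = U.trace * g (n + 1) q m - g n q m := by
    intro q m n
    simp only [hg, powrec U hU n]
    simp [mul_sub, sub_mul, mul_smul_comm, smul_mul_assoc, Matrix.trace_sub,
      Matrix.trace_smul, smul_eq_mul]
  -- 8 concrete base cases
  have b000 : f 0 0 0 = g 0 0 0 := by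
    simp [hf, hg, Matrix.trace_mul_comm V U]
  have b100 : f 1 0 0 = g 1 0 0 := by
    simp only [hf, hg, pow_zero, pow_one, one_mul, mul_one]
    rw [Matrix.trace_mul_comm]
    congr 1; noncomm_ring
  have b010 : f 0 1 0 = g 0 1 0 := by
    simp only [hf, hg, pow_zero, pow_one, one_mul, mul_one]
    rw [show V * U * V = V * (U * V) from by noncomm_ring, Matrix.trace_mul_comm]
  have b110 : f 1 1 0 = g 1 1 0 := by
    simp only [hf, hg, pow_zero, pow_one, one_mul, mul_one]
    rw [show V * U * (V * U) = V * (U * (V * U)) from by noncomm_ring,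
      Matrix.trace_mul_comm]
    congr 1; noncomm_ring
  have b001 : f 0 0 1 = g 0 0 1 := by
    simp only [hf, hg, pow_zero, pow_one, one_mul, mul_one]
    rw [Matrix.trace_mul_comm]
  have b101 : f 1 0 1 = g 1 0 1 := by
    simp only [hf, hg, pow_zero, pow_one, one_mul, mul_one]
    rw [show V * U * (U * V * U) = (V * U) * (U * V * U) from by noncomm_ring,
      Matrix.trace_mul_comm]
    congr 1; noncomm_ring
  have b011 : f 0 1 1 = g 0 1 1 := by
    simp only [hf, hg, pow_zero, pow_one, one_mul, mul_one]
    rw [show V * U * (V * (U * V)) = (V * U * V) * (U * V) from by noncomm_ring,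
      Matrix.trace_mul_comm]
  have b111 : f 1 1 1 = g 1 1 1 := by
    simp only [hf, hg, pow_zero, pow_one, one_mul, mul_one]
    rw [show V * U * (V * (U * V) * U) = V * (U * (V * (U * V) * U)) from by noncomm_ring,
      Matrix.trace_mul_comm]
    congr 1; noncomm_ring
  -- q-level: ∀ p q, at m = 0 and m = 1
  have bq0 : ∀ q, f 0 q 0 = g 0 q 0 ∧ f 1 q 0 = g 1 q 0 ∧ f 0 q 1 = g 0 q 1 ∧ f 1 q 1 = g 1 q 1 := by
    intro q
    refine ⟨two_step V.trace (fun q => f 0 q 0) (fun q => g 0 q 0) b000 b010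
        (fun n => hfq 0 0 n) (fun n => hgq 0 0 n) q,
      two_step V.trace (fun q => f 1 q 0) (fun q => g 1 q 0) b100 b110
        (fun n => hfq 1 0 n) (fun n => hgq 1 0 n) q,
      two_step V.trace (fun q => f 0 q 1) (fun q => g 0 q 1) b001 b011
        (fun n => hfq 0 1 n) (fun n => hgq 0 1 n) q,
      two_step V.trace (fun q => f 1 q 1) (fun q => g 1 q 1) b101 b111
        (fun n => hfq 1 1 n) (fun n => hgq 1 1 n) q⟩
  have bp : ∀ p q, f p q 0 = g p q 0 ∧ f p q 1 = g p q 1 := by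
    intro p q
    refine ⟨two_step U.trace (fun p => f p q 0) (fun p => g p q 0) (bq0 q).1 (bq0 q).2.1
        (fun n => hfp q 0 n) (fun n => hgp q 0 n) p,
      two_step U.trace (fun p => f p q 1) (fun p => g p q 1) (bq0 q).2.2.1 (bq0 q).2.2.2
        (fun n => hfp q 1 n) (fun n => hgp q 1 n) p⟩
  exact two_step (U * V).trace (fun m => f p q m) (fun m => g p q m)
    (bp p q).1 (bp p q).2 (fun n => hfm p q n) (fun n => hgm p q n) m

theorem W1_sub_W0 (U V : Matrix (Fin 2) (Fin 2) ℝ)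
    (hU : U.det = 1) (hV : V.det = 1)
    (htrU : 2 < U.trace) (htrV : 2 < V.trace)
    (p q : ℕ) (hp : 1 ≤ p) (hq : 1 ≤ q) (m : ℕ)
    (X Xt Y Yt W0 W1 : Matrix (Fin 2) (Fin 2) ℝ)
    (hX : X = U * V) (hXt : Xt = V * U)
    (hY : Y = V ^ q * (U * V) ^ m * U ^ p)
    (hYt : Yt = U ^ p * (V * U) ^ m * V ^ q)
    (hW0 : W0 = X * Y * X) (hW1 : W1 = Xt * Y * Xt)
    (η t₁ : ℝ)
    (hη : η = (X * (Yt - Y)).trace) (ht₁ : t₁ = (X * Y).trace) :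
    W1 - W0 = η • Xt + t₁ • (Xt - X) := by
  have hdetX : X.det = 1 := by rw [hX, Matrix.det_mul, hU, hV, one_mul]
  have hdetXt : Xt.det = 1 := by rw [hXt, Matrix.det_mul, hU, hV, one_mul]
  have hdetY : Y.det = 1 := by
    rw [hY]
    simp [Matrix.det_mul, Matrix.det_pow, hU, hV]
  have hdetXY : (X * Y).det = 1 := by rw [Matrix.det_mul, hdetX, hdetY, one_mul]
  have hdetXtY : (Xt * Y).det = 1 := by rw [Matrix.det_mul, hdetXt, hdetY, one_mul]
  have h0 : W0 * Y = t₁ • (X * Y) - 1 := by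
    rw [hW0, ht₁]
    calc X * Y * X * Y = (X * Y) * (X * Y) := by noncomm_ring
      _ = (X * Y).trace • (X * Y) - 1 := CH2 _ hdetXY
  have h1 : W1 * Y = (Xt * Y).trace • (Xt * Y) - 1 := by
    rw [hW1]
    calc Xt * Y * Xt * Y = (Xt * Y) * (Xt * Y) := by noncomm_ring
      _ = (Xt * Y).trace • (Xt * Y) - 1 := CH2 _ hdetXtY
  have h2 : (Xt * Y).trace = (X * Yt).trace := by
    rw [hX, hXt, hY, hYt]
    exact trace_eq U V hU hV p q m
  have htt : (Xt * Y).trace = t₁ + η := by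
    rw [hη, ht₁, mul_sub, Matrix.trace_sub, h2]; ring
  have hmul : (W1 - W0) * Y = (η • Xt + t₁ • (Xt - X)) * Y := by
    rw [sub_mul, h0, h1, htt, add_mul, smul_mul_assoc, smul_mul_assoc, sub_mul,
      add_smul, smul_sub]
    abel
  have hYu : IsUnit Y.det := by rw [hdetY]; exact isUnit_one
  calc W1 - W0 = (W1 - W0) * Y * Y⁻¹ := (Matrix.mul_nonsing_inv_cancel_right _ _ hYu).symm
    _ = (η • Xt + t₁ • (Xt - X)) * Y * Y⁻¹ := by rw [hmul]
    _ = η • Xt + t₁ • (Xt - X) := Matrix.mul_nonsing_inv_cancel_right _ _ hYu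
end

section
/- Let A, B ∈ SL(2,ℝ) form a balanced pair (normal form as in the three cases (h), (m), (p)), and fix integers p, q ≥ 1. Then tr(A^p B^q A B) > tr(A^{p+1} B^{q+1}). -/
/-!
For `A ∈ SL₂`, Cayley–Hamilton gives `A ^ (n + 2) = tr A • A ^ (n + 1) - A ^ n`, so every
quantity that is linear in `A ^ n` satisfies the recursion of the rescaled Chebyshev polynomials
`S` (the paper's `Γ_{n+1}(A)` is `S_n(tr A)`). Applying this once in `A` and once in `B` gives
`tr(A^(p+1) B^(q+1) A B) - tr(A^(p+2) B^(q+2)) = S_p(tr A) S_q(tr B) (tr((AB)²) - tr(A²B²))`,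
and `tr((AB)²) - tr(A²B²) = -det ⁅A, B⁆`. For traces `≥ 2` the Chebyshev factors are positive,
so it remains to see `det ⁅A, B⁆ < 0` in the three normal forms. Each matrix there is
`a • 1 + b • K` for an explicit `K`, and the commutator only sees the `K` parts; in case (h)
`det ⁅K₁, K₂⁆` is minus the resultant of the fixed-point polynomials, which is positive exactly
because the fixed points of `A` and `B` are not interlaced.
-/

open Matrix

/-- The hyperbolic matrix `H^λ_{s,u}`. -/
noncomputable def Hmat (l s u : ℝ) : Matrix (Fin 2) (Fin 2) ℝ :=
  !![s, u; 1, 1] * !![l, 0; 0, l⁻¹] * (!![s, u; 1, 1])⁻¹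

/-- `(A,B)` is a balanced pair in normal form: case (h), (m) or (p). -/
def BalancedNormalForm (A B : Matrix (Fin 2) (Fin 2) ℝ) : Prop :=
  (∃ l₁ l₂ s₁ s₂ u₁ u₂ : ℝ, 1 < l₁ ∧ 1 < l₂ ∧
      u₂ < u₁ ∧ u₁ < 0 ∧ 0 < s₁ ∧ s₁ < s₂ ∧
      A = Hmat l₁ s₁ u₁ ∧ B = Hmat l₂ s₂ u₂) ∨
  (∃ l s u x : ℝ, 1 < l ∧ u < 0 ∧ 0 < s ∧ 0 < x ∧
      A = Hmat l s u ∧ B = !![1, 0; x, 1]) ∨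
  (∃ x y : ℝ, 0 < x ∧ 0 < y ∧ A = !![1, 0; x, 1] ∧ B = !![1, y; 0, 1])

open Polynomial Chebyshev

lemma Polynomial.Chebyshev.S_eval_add_two {R : Type*} [CommRing R] (t : R) (n : ℤ) :
    (S R (n + 2)).eval t = t * (S R (n + 1)).eval t - (S R n).eval t := by
  simp [S_add_two]

lemma Polynomial.Chebyshev.S_eval_mul_of_rec {R : Type*} [CommRing R] {f : ℕ → R} {t : R}
    (h0 : f 0 = 0) (hrec : ∀ n, f (n + 2) = t * f (n + 1) - f n) (n : ℕ) :
    f (n + 1) = (S R n).eval t * f 1 := by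
  suffices ∀ n : ℕ,
      f (n + 1) = (S R n).eval t * f 1 ∧ f (n + 2) = (S R (n + 1)).eval t * f 1 from
    (this n).1
  intro n
  induction n with
  | zero => simp [hrec 0, h0]
  | succ n ih =>
    refine ⟨ih.2, ?_⟩
    rw [hrec, ih.1, ih.2]
    push_cast
    rw [add_assoc, one_add_one_eq_two, S_eval_add_two]
    ring

lemma Polynomial.Chebyshev.add_one_le_S_eval {R : Type*} [CommRing R] [LinearOrder R]
    [IsStrictOrderedRing R] {t : R} (ht : 2 ≤ t) (n : ℕ) : (n : R) + 1 ≤ (S R n).eval t := by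
  suffices ∀ n : ℕ,
      (n : R) + 1 ≤ (S R n).eval t ∧ (S R n).eval t + 1 ≤ (S R (n + 1)).eval t from
    (this n).1
  intro n
  induction n with
  | zero => simpa [one_add_one_eq_two] using ht
  | succ n ih =>
    obtain ⟨h₁, h₂⟩ := ih
    have hS : 2 * (S R ((n : ℤ) + 1)).eval t ≤ t * (S R ((n : ℤ) + 1)).eval t :=
      mul_le_mul_of_nonneg_right ht (by linarith [n.cast_nonneg (α := R)])
    push_cast
    refine ⟨by linarith, ?_⟩
    rw [add_assoc, one_add_one_eq_two, S_eval_add_two]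
    linarith

lemma lie_smul_one_add_smul {R A : Type*} [CommRing R] [Ring A] [Algebra R A] (a b c d : R)
    (X Y : A) : ⁅a • (1 : A) + b • X, c • 1 + d • Y⁆ = (b * d) • ⁅X, Y⁆ := by
  simp only [Ring.lie_def, add_mul, mul_add, smul_mul_smul_comm, one_mul, mul_one, smul_sub]
  module

namespace Matrix

section CommRing

variable {R : Type*} [CommRing R]

lemma sq_eq_trace_smul_sub_det_smul (A : Matrix (Fin 2) (Fin 2) R) :
    A ^ 2 = A.trace • A - A.det • 1 := by
  ext i j
  fin_cases i <;> fin_cases j <;> simp [sq, mul_apply, trace_fin_two, det_fin_two] <;> ring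

lemma pow_add_two_eq {A : Matrix (Fin 2) (Fin 2) R} (hA : A.det = 1) (n : ℕ) :
    A ^ (n + 2) = A.trace • A ^ (n + 1) - A ^ n := by
  rw [pow_add, sq_eq_trace_smul_sub_det_smul, hA, one_smul, mul_sub, mul_smul_comm, mul_one,
    pow_succ]

lemma trace_pow_mul_sub_eq {A : Matrix (Fin 2) (Fin 2) R} (hA : A.det = 1)
    {X Y : Matrix (Fin 2) (Fin 2) R} (h0 : X.trace = (A * Y).trace) (n : ℕ) :
    (A ^ (n + 1) * X).trace - (A ^ (n + 2) * Y).trace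
      = (S R n).eval A.trace * ((A * X).trace - (A ^ 2 * Y).trace) := by
  have key := S_eval_mul_of_rec (f := fun n ↦ (A ^ n * X).trace - (A ^ (n + 1) * Y).trace)
    (t := A.trace) (by simp [h0]) (fun n ↦ by
      simp only [pow_add_two_eq hA, sub_mul, smul_mul_assoc, trace_sub, trace_smul, smul_eq_mul]
      ring) n
  simpa using key

lemma trace_pow_mul_pow_mul_mul_sub {A B : Matrix (Fin 2) (Fin 2) R} (hA : A.det = 1)
    (hB : B.det = 1) (p q : ℕ) :
    (A ^ (p + 1) * B ^ (q + 1) * A * B).trace - (A ^ (p + 2) * B ^ (q + 2)).trace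
      = (S R p).eval A.trace * (S R q).eval B.trace *
          (((A * B) ^ 2).trace - (A ^ 2 * B ^ 2).trace) := by
  have hA' := trace_pow_mul_sub_eq hA (X := B ^ (q + 1) * A * B) (Y := B ^ (q + 2))
    (by rw [trace_mul_cycle, ← pow_succ', trace_mul_comm]) p
  have hB' := trace_pow_mul_sub_eq hB (X := A * B * A) (Y := A ^ 2)
    (by rw [trace_mul_cycle, trace_mul_comm, sq]) q
  have h1 : (A * (B ^ (q + 1) * A * B)).trace = (B ^ (q + 1) * (A * B * A)).trace := by
    rw [trace_mul_comm]; simp only [mul_assoc]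
  have h2 : (B * (A * B * A)).trace = ((A * B) ^ 2).trace := by
    rw [trace_mul_comm, sq]; simp only [mul_assoc]
  rw [show A ^ (p + 1) * B ^ (q + 1) * A * B = A ^ (p + 1) * (B ^ (q + 1) * A * B) by
    simp only [mul_assoc], hA', h1, trace_mul_comm (A ^ 2), hB', h2, trace_mul_comm (B ^ 2)]
  ring

lemma trace_mul_sq_sub_trace_sq_mul_sq (A B : Matrix (Fin 2) (Fin 2) R) :
    ((A * B) ^ 2).trace - (A ^ 2 * B ^ 2).trace = -⁅A, B⁆.det := by
  simp only [Ring.lie_def, sq, det_fin_two, trace_fin_two, Matrix.sub_apply, mul_apply,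
    Fin.sum_univ_two]
  ring

lemma det_lie_smul_one_add_smul (a b c d : R) (X Y : Matrix (Fin 2) (Fin 2) R) :
    ⁅a • (1 : Matrix (Fin 2) (Fin 2) R) + b • X, c • 1 + d • Y⁆.det
      = (b * d) ^ 2 * ⁅X, Y⁆.det := by
  rw [lie_smul_one_add_smul, det_smul, Fintype.card_fin]

lemma det_lie_fixedPoints (s₁ u₁ s₂ u₂ : R) :
    ⁅!![s₁, -(s₁ * u₁); 1, -u₁], !![s₂, -(s₂ * u₂); 1, -u₂]⁆.det
      = -((s₂ - s₁) * (s₁ - u₂) * (s₂ - u₁) * (u₁ - u₂)) := by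
  rw [Ring.lie_def, mul_fin_two, mul_fin_two, of_sub_of, det_fin_two]
  simp only [of_apply, Pi.sub_apply, cons_val_zero, cons_val_one, cons_val_fin_one]
  ring

lemma det_lie_fixedPoints_lower (s u : R) :
    ⁅!![s, -(s * u); 1, -u], !![0, 0; 1, 0]⁆.det = -(s * u) ^ 2 := by
  rw [Ring.lie_def, mul_fin_two, mul_fin_two, of_sub_of, det_fin_two]
  simp only [of_apply, Pi.sub_apply, cons_val_zero, cons_val_one, cons_val_fin_one]
  ring

lemma det_lie_lower_upper :
    ⁅(!![0, 0; 1, 0] : Matrix (Fin 2) (Fin 2) R), (!![0, 1; 0, 0] : Matrix (Fin 2) (Fin 2) R)⁆.det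
      = -1 := by
  rw [Ring.lie_def, mul_fin_two, mul_fin_two, of_sub_of, det_fin_two]
  simp only [of_apply, Pi.sub_apply, cons_val_zero, cons_val_one, cons_val_fin_one]
  ring

lemma lower_unipotent_eq (x : R) : !![1, 0; x, 1] = (1 : R) • 1 + x • !![0, 0; 1, 0] := by
  ext i j; fin_cases i <;> fin_cases j <;> simp

lemma upper_unipotent_eq (y : R) : !![1, y; 0, 1] = (1 : R) • 1 + y • !![0, 1; 0, 0] := by
  ext i j; fin_cases i <;> fin_cases j <;> simp

end CommRing

end Matrix

lemma two_le_add_inv {K : Type*} [Field K] [LinearOrder K] [IsStrictOrderedRing K] {l : K}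
    (hl : 0 < l) : 2 ≤ l + l⁻¹ := by
  have : l + l⁻¹ - 2 = (l - 1) ^ 2 / l := by field_simp; ring
  linarith [show 0 ≤ (l - 1) ^ 2 / l by positivity]

lemma isUnit_eigenbasis {K : Type*} [Field K] {s u : K} (hsu : s ≠ u) : IsUnit !![s, u; 1, 1] := by
  rw [isUnit_iff_isUnit_det, det_fin_two_of, isUnit_iff_ne_zero]
  simpa [sub_eq_zero] using hsu

lemma det_Hmat {l s u : ℝ} (hl : l ≠ 0) (hsu : s ≠ u) : (Hmat l s u).det = 1 := by
  rw [Hmat, det_conj (isUnit_eigenbasis hsu), det_fin_two_of]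
  simp [hl]

lemma trace_Hmat (l : ℝ) {s u : ℝ} (hsu : s ≠ u) : (Hmat l s u).trace = l + l⁻¹ := by
  rw [Hmat, trace_conj (isUnit_eigenbasis hsu), trace_fin_two_of]

/-- `!![s, -(s * u); 1, -u]` kills `(u, 1)` and scales `(s, 1)` by `s - u`. -/
lemma Hmat_eq (l : ℝ) {s u : ℝ} (hsu : s ≠ u) :
    Hmat l s u = l⁻¹ • 1 + ((l - l⁻¹) / (s - u)) • !![s, -(s * u); 1, -u] := by
  have hsu' : s - u ≠ 0 := sub_ne_zero.mpr hsu
  rw [Hmat, inv_def, det_fin_two_of, adjugate_fin_two_of, Ring.inverse_eq_inv']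
  ext i j
  fin_cases i <;> fin_cases j <;> simp <;> field_simp <;> ring

namespace BalancedNormalForm

variable {A B : Matrix (Fin 2) (Fin 2) ℝ}

lemma det_eq_one (h : BalancedNormalForm A B) : A.det = 1 ∧ B.det = 1 := by
  rcases h with ⟨l₁, l₂, s₁, s₂, u₁, u₂, hl₁, hl₂, hu, hu₁, hs₁, hs, rfl, rfl⟩ |
    ⟨l, s, u, x, hl, hu, hs, hx, rfl, rfl⟩ | ⟨x, y, hx, hy, rfl, rfl⟩
  · exact ⟨det_Hmat (by positivity) (by linarith), det_Hmat (by positivity) (by linarith)⟩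
  · exact ⟨det_Hmat (by positivity) (by linarith), by simp [det_fin_two_of]⟩
  · simp [det_fin_two_of]

lemma two_le_trace (h : BalancedNormalForm A B) : 2 ≤ A.trace ∧ 2 ≤ B.trace := by
  rcases h with ⟨l₁, l₂, s₁, s₂, u₁, u₂, hl₁, hl₂, hu, hu₁, hs₁, hs, rfl, rfl⟩ |
    ⟨l, s, u, x, hl, hu, hs, hx, rfl, rfl⟩ | ⟨x, y, hx, hy, rfl, rfl⟩
  · rw [trace_Hmat _ (by linarith), trace_Hmat _ (by linarith)]
    exact ⟨two_le_add_inv (by positivity), two_le_add_inv (by positivity)⟩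
  · rw [trace_Hmat _ (by linarith), trace_fin_two_of]
    exact ⟨two_le_add_inv (by positivity), by norm_num⟩
  · norm_num [trace_fin_two_of]

lemma det_lie_neg (h : BalancedNormalForm A B) : ⁅A, B⁆.det < 0 := by
  rcases h with ⟨l₁, l₂, s₁, s₂, u₁, u₂, hl₁, hl₂, hu, hu₁, hs₁, hs, rfl, rfl⟩ |
    ⟨l, s, u, x, hl, hu, hs, hx, rfl, rfl⟩ | ⟨x, y, hx, hy, rfl, rfl⟩
  · rw [Hmat_eq _ (by linarith), Hmat_eq _ (by linarith), det_lie_smul_one_add_smul,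
      det_lie_fixedPoints]
    have hb₁ : 0 < (l₁ - l₁⁻¹) / (s₁ - u₁) :=
      div_pos (by linarith [inv_lt_one_of_one_lt₀ hl₁]) (by linarith)
    have hb₂ : 0 < (l₂ - l₂⁻¹) / (s₂ - u₂) :=
      div_pos (by linarith [inv_lt_one_of_one_lt₀ hl₂]) (by linarith)
    have hres : 0 < (s₂ - s₁) * (s₁ - u₂) * (s₂ - u₁) * (u₁ - u₂) := by
      apply_rules [mul_pos] <;> linarith
    exact mul_neg_of_pos_of_neg (pow_pos (mul_pos hb₁ hb₂) 2) (neg_neg_of_pos hres)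
  · rw [Hmat_eq _ (by linarith), lower_unipotent_eq, det_lie_smul_one_add_smul, det_lie_fixedPoints_lower]
    have hb : 0 < (l - l⁻¹) / (s - u) :=
      div_pos (by linarith [inv_lt_one_of_one_lt₀ hl]) (by linarith)
    have hsu : 0 < (s * u) ^ 2 := sq_pos_of_neg (mul_neg_of_pos_of_neg hs hu)
    exact mul_neg_of_pos_of_neg (pow_pos (mul_pos hb hx) 2) (neg_neg_of_pos hsu)
  · rw [lower_unipotent_eq, upper_unipotent_eq, det_lie_smul_one_add_smul, det_lie_lower_upper]
    exact mul_neg_of_pos_of_neg (pow_pos (mul_pos hx hy) 2) neg_one_lt_zero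

end BalancedNormalForm

theorem trace_ApBqAB_gt (A B : Matrix (Fin 2) (Fin 2) ℝ)
    (h : BalancedNormalForm A B)
    (p q : ℕ) (hp : 1 ≤ p) (hq : 1 ≤ q) :
    (A ^ p * B ^ q * A * B).trace > (A ^ (p + 1) * B ^ (q + 1)).trace := by
  obtain ⟨hdetA, hdetB⟩ := h.det_eq_one
  obtain ⟨htrA, htrB⟩ := h.two_le_trace
  obtain ⟨p, rfl⟩ := Nat.exists_eq_add_of_le' hp
  obtain ⟨q, rfl⟩ := Nat.exists_eq_add_of_le' hq
  have hSp : 0 < (S ℝ p).eval A.trace := lt_of_lt_of_le (by positivity) (add_one_le_S_eval htrA p)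
  have hSq : 0 < (S ℝ q).eval B.trace := lt_of_lt_of_le (by positivity) (add_one_le_S_eval htrB q)
  rw [gt_iff_lt, ← sub_pos, trace_pow_mul_pow_mul_mul_sub hdetA hdetB,
    trace_mul_sq_sub_trace_sq_mul_sq]
  exact mul_pos (mul_pos hSp hSq) (neg_pos.mpr h.det_lie_neg)
end
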